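/- arXiv:2605.20365 — 2 statements merged into one kernel-verified Lean document; each statement's English description precedes it below -/
import Mathlib

section
/- Let Ĝ be a topological group, G ≤ Ĝ a dense subgroup, and Û ≤ Ĝ an open (hence closed) subgroup with G ∩ Û dense in Û. Then for any subgroup A ≤ G, the closure of (G ∩ Û) ∩ A in Ĝ equals Û ∩ (closure of A in Ĝ). -/
theorem closure_intersection_with_open_subgroup
    {Ghat : Type*} [Group Ghat] [TopologicalSpace Ghat] [IsTopologicalGroup Ghat]
    (G Uhat : Subgroup Ghat) (hG : Dense (G : Set Ghat))
    (hopen : IsOpen (Uhat : Set Ghat))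
    (hdense : closure ((G ⊓ Uhat : Subgroup Ghat) : Set Ghat) = (Uhat : Set Ghat))
    (A : Subgroup Ghat) (hA : A ≤ G) :
    closure (((G ⊓ Uhat : Subgroup Ghat) : Set Ghat) ∩ (A : Set Ghat)) =
      (Uhat : Set Ghat) ∩ closure (A : Set Ghat) := by
  have hset : ((G ⊓ Uhat : Subgroup Ghat) : Set Ghat) ∩ (A : Set Ghat)
      = (Uhat : Set Ghat) ∩ (A : Set Ghat) := by
    ext x
    simp only [Subgroup.coe_inf, Set.mem_inter_iff, Set.mem_inter_iff]
    exact ⟨fun ⟨⟨_, hu⟩, ha⟩ => ⟨hu, ha⟩, fun ⟨hu, ha⟩ => ⟨⟨hA ha, hu⟩, ha⟩⟩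
  rw [hset]
  have hclosed : IsClosed (Uhat : Set Ghat) :=
    (Subgroup.isClosed_of_isOpen Uhat hopen)
  apply Set.Subset.antisymm
  · intro x hx
    exact ⟨hclosed.closure_subset (closure_mono Set.inter_subset_left hx),
      closure_mono Set.inter_subset_right hx⟩
  · exact hopen.inter_closure.trans (closure_mono (by rfl))
end

section
/- Let Ĝ be a compact topological group, G ≤ Ĝ dense, m ∈ G, Û ≤ Ĝ open with U = G ∩ Û. Define the discrete ramification subgroup M_U as the normal closure in U of all U ∩ g⟨m⟩g⁻¹ (g ∈ G), and the closed ramification subgroup M̂ as the smallest closed normal subgroup of Û containing all Û ∩ x·cl(⟨m⟩)·x⁻¹ for x ∈ Ĝ. Then cl(M_U) = M̂, i.e., the closure in Û of M_U equals M̂. -/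
/-- The discrete ramification subgroup of `U = G ⊓ Û`: the normal closure in `U`
of all meridional inertia subgroups `U ∩ g⟨m⟩g⁻¹` for `g ∈ G`. -/
def discreteRamification {Ghat : Type*} [Group Ghat]
    (G Uhat : Subgroup Ghat) (m : Ghat) : Subgroup ↥(G ⊓ Uhat) :=
  Subgroup.normalClosure
    {u : ↥(G ⊓ Uhat) | ∃ g ∈ G, ∃ k : ℤ, (u : Ghat) = g * m ^ k * g⁻¹}

/-- The closed ramification subgroup `M̂`: the smallest closed subgroup of `Ĝ`
contained in `Û`, normal in `Û`, and containing every closed inertia subgroup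
`Û ∩ x·cl(⟨m⟩)·x⁻¹` for `x ∈ Ĝ`. -/
def closedRamification {Ghat : Type*} [Group Ghat] [TopologicalSpace Ghat]
    (Uhat : Subgroup Ghat) (m : Ghat) : Subgroup Ghat :=
  sInf {K : Subgroup Ghat | K ≤ Uhat ∧ IsClosed (K : Set Ghat) ∧
    (∀ u ∈ Uhat, ∀ n ∈ K, u * n * u⁻¹ ∈ K) ∧
    ∀ x : Ghat,
      (Uhat : Set Ghat) ∩
        {z : Ghat | ∃ h ∈ closure ((Subgroup.zpowers m : Subgroup Ghat) : Set Ghat),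
          z = x * h * x⁻¹} ⊆ (K : Set Ghat)}

theorem closure_of_discrete_ramification_eq_closed_ramification
    {Ghat : Type*} [Group Ghat] [TopologicalSpace Ghat] [IsTopologicalGroup Ghat]
    [CompactSpace Ghat]
    (G Uhat : Subgroup Ghat) (hG : Dense (G : Set Ghat))
    (hopen : IsOpen (Uhat : Set Ghat)) (m : Ghat) (hm : m ∈ G) :
    closure ((Subgroup.map (G ⊓ Uhat).subtype (discreteRamification G Uhat m) :
        Subgroup Ghat) : Set Ghat) =
      ((closedRamification Uhat m : Subgroup Ghat) : Set Ghat) := by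
  classical
  set M : Subgroup Ghat :=
    Subgroup.map (G ⊓ Uhat).subtype (discreteRamification G Uhat m) with hMdef
  set S : Set (Subgroup Ghat) := {K : Subgroup Ghat | K ≤ Uhat ∧ IsClosed (K : Set Ghat) ∧
    (∀ u ∈ Uhat, ∀ n ∈ K, u * n * u⁻¹ ∈ K) ∧
    ∀ x : Ghat,
      (Uhat : Set Ghat) ∩
        {z : Ghat | ∃ h ∈ closure ((Subgroup.zpowers m : Subgroup Ghat) : Set Ghat),
          z = x * h * x⁻¹} ⊆ (K : Set Ghat)} with hSdef
  have hcr : closedRamification Uhat m = sInf S := rfl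
  have hUclosed : IsClosed (Uhat : Set Ghat) := Subgroup.isClosed_of_isOpen Uhat hopen
  -- `M ≤ Uhat`
  have hMU : M ≤ Uhat := by
    rintro z ⟨u, _, rfl⟩
    exact u.2.2
  rw [hcr]
  apply Set.Subset.antisymm
  · -- `closure M ⊆ sInf S`
    have hclosed : IsClosed ((sInf S : Subgroup Ghat) : Set Ghat) := by
      rw [Subgroup.coe_sInf]
      exact isClosed_iInter fun K => isClosed_iInter fun hK => hK.2.1
    refine closure_minimal ?_ hclosed
    refine SetLike.coe_subset_coe.mpr (le_sInf fun K hK => ?_)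
    rw [hMdef, Subgroup.map_le_iff_le_comap]
    haveI : (K.comap (G ⊓ Uhat).subtype).Normal := by
      constructor
      intro n hn g
      simp only [Subgroup.mem_comap, Subgroup.coe_subtype, Subgroup.coe_mul,
        Subgroup.coe_inv] at hn ⊢
      exact hK.2.2.1 (g : Ghat) g.2.2 (n : Ghat) hn
    refine Subgroup.normalClosure_le_normal ?_
    rintro u ⟨g, hg, k, hgk⟩
    simp only [SetLike.mem_coe, Subgroup.mem_comap, Subgroup.coe_subtype]
    exact hK.2.2.2 g ⟨u.2.2, ⟨m ^ k, subset_closure ⟨k, rfl⟩, hgk⟩⟩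
  · -- `sInf S ⊆ closure M`
    have hCmem : M.topologicalClosure ∈ S := by
      refine ⟨?_, M.isClosed_topologicalClosure, ?_, ?_⟩
      · exact Subgroup.topologicalClosure_minimal M hMU hUclosed
      · -- stability under conjugation by elements of `Uhat`
        intro u hu n hn
        -- first: conjugation by elements of `G ⊓ Uhat` preserves `M`
        have step1 : ∀ w ∈ M, ∀ v ∈ Uhat, v * w * v⁻¹ ∈ closure (M : Set Ghat) := by
          intro w hw v hv
          have hT : IsClosed {v : Ghat | v * w * v⁻¹ ∈ closure (M : Set Ghat)} := by
            have : Continuous fun v : Ghat => v * w * v⁻¹ := by continuity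
            exact isClosed_closure.preimage this
          have hsub : ((G ⊓ Uhat : Subgroup Ghat) : Set Ghat) ⊆
              {v : Ghat | v * w * v⁻¹ ∈ closure (M : Set Ghat)} := by
            intro g hg
            obtain ⟨w', hw', hw'eq⟩ := hw
            have : (⟨g, hg⟩ : ↥(G ⊓ Uhat)) * w' * (⟨g, hg⟩ : ↥(G ⊓ Uhat))⁻¹ ∈
                discreteRamification G Uhat m :=
              (Subgroup.normalClosure_normal).conj_mem w' hw' ⟨g, hg⟩
            have hmem : g * w * g⁻¹ ∈ M := by
              refine ⟨_, this, ?_⟩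
              simp [← hw'eq]
            exact subset_closure hmem
          -- `Uhat ⊆ closure (G ⊓ Uhat)`
          have hdense : (Uhat : Set Ghat) ⊆ closure ((G ⊓ Uhat : Subgroup Ghat) : Set Ghat) := by
            intro v hv
            rw [mem_closure_iff]
            intro O hO hvO
            obtain ⟨g, hgO, hgG⟩ := hG.inter_open_nonempty (O ∩ (Uhat : Set Ghat))
              (hO.inter hopen) ⟨v, hvO, hv⟩
            exact ⟨g, hgO.1, hgG, hgO.2⟩
          exact hT.closure_subset_iff.mpr hsub (hdense hv)
        -- now use continuity of conjugation by `u`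
        have hcont : Continuous fun w : Ghat => u * w * u⁻¹ := by continuity
        have hsub2 : (M : Set Ghat) ⊆
            (fun w : Ghat => u * w * u⁻¹) ⁻¹' (M.topologicalClosure : Set Ghat) :=
          fun w hw => step1 w hw u hu
        have := closure_minimal hsub2 (M.isClosed_topologicalClosure.preimage hcont)
        exact this hn
      · -- contains all closed inertia subgroups
        intro x z hz
        obtain ⟨hzU, h, hh, rfl⟩ := hz
        show x * h * x⁻¹ ∈ closure (M : Set Ghat)
        rw [mem_closure_iff]
        intro O hO hzO
        have hW : IsOpen (O ∩ (Uhat : Set Ghat)) := hO.inter hopen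
        have hφ : Continuous fun p : Ghat × Ghat => p.1 * p.2 * p.1⁻¹ := by continuity
        have hpre : IsOpen ((fun p : Ghat × Ghat => p.1 * p.2 * p.1⁻¹) ⁻¹'
            (O ∩ (Uhat : Set Ghat))) := hW.preimage hφ
        have hxh : (x, h) ∈ (fun p : Ghat × Ghat => p.1 * p.2 * p.1⁻¹) ⁻¹'
            (O ∩ (Uhat : Set Ghat)) := ⟨hzO, hzU⟩
        obtain ⟨V, V', hV, hV', hxV, hhV', hVV'⟩ := isOpen_prod_iff.mp hpre x h hxh
        obtain ⟨g, hgV, hgG⟩ := hG.inter_open_nonempty V hV ⟨x, hxV⟩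
        obtain ⟨p, hpV', hpZ⟩ := mem_closure_iff.mp hh V' hV' hhV'
        obtain ⟨k, rfl⟩ := hpZ
        have hwW : g * m ^ k * g⁻¹ ∈ O ∩ (Uhat : Set Ghat) :=
          hVV' (Set.mk_mem_prod hgV hpV')
        have hwG : g * m ^ k * g⁻¹ ∈ G := by
          exact G.mul_mem (G.mul_mem hgG (G.zpow_mem hm k)) (G.inv_mem hgG)
        have hwM : g * m ^ k * g⁻¹ ∈ M := by
          refine ⟨⟨g * m ^ k * g⁻¹, hwG, hwW.2⟩, ?_, rfl⟩
          exact Subgroup.subset_normalClosure ⟨g, hgG, k, rfl⟩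
        exact ⟨g * m ^ k * g⁻¹, hwW.1, hwM⟩
    intro z hz
    have := sInf_le hCmem
    exact this hz
end
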